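/- arXiv:1702.04965 — 3 statements merged into one kernel-verified Lean document; each statement's English description precedes it below -/
import Mathlib

section
/- For the vector field X = (∂h/∂x₂ + h·∂h/∂x₁, -∂h/∂x₁ + h·∂h/∂x₂) associated to a C¹ function h : ℝ² → ℝ, the zero level set {h = 0} is invariant: any integral curve of X starting at a point where h = 0 remains in the zero set of h. -/
/-!
Along a solution `γ`, the chain rule gives `(h ∘ γ)' = dh(X) = |∇h|² · (h ∘ γ)`, because the
first part of `X` is the Hamiltonian field of `h`, which `dh` annihilates, and the second is
`h ∇h`. So `h ∘ γ` solves a scalar linear ODE with continuous coefficient and vanishes at `t₀`.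
Such a solution vanishes near each of its zeros by Grönwall uniqueness (the coefficient is
locally bounded), so its zero set is open and closed in the interval, hence everything.
-/

open Set Filter Topology

section LinearODE

variable {E : Type*} [NormedAddCommGroup E] [NormedSpace ℝ E] {u : ℝ → E} {c : ℝ → ℝ}

theorem eventuallyEq_zero_of_hasDerivAt_smul_self {s : ℝ} (hc : ContinuousAt c s)
    (hu : ∀ᶠ t in 𝓝 s, HasDerivAt u (c t • u t) t) (h0 : u s = 0) : u =ᶠ[𝓝 s] 0 := by
  have hlip : ∀ᶠ t in 𝓝 s, LipschitzOnWith (‖c s‖₊ + 1) (c t • · : E → E) univ :=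
    (hc.nnnorm.eventually_lt continuousAt_const (lt_add_one _)).mono fun t ht =>
      ((lipschitzWith_smul (c t)).weaken ht.le).lipschitzOnWith
  exact ODE_solution_unique_of_eventually (v := fun t x => c t • x) hlip
    (hu.mono fun t ht => ⟨ht, mem_univ _⟩)
    (Eventually.of_forall fun t => ⟨by simp, mem_univ _⟩) h0

theorem eqOn_zero_of_hasDerivAt_smul_self {a b t₀ : ℝ} (hc : ContinuousOn c (Ioo a b))
    (hu : ∀ t ∈ Ioo a b, HasDerivAt u (c t • u t) t) (ht₀ : t₀ ∈ Ioo a b) (h0 : u t₀ = 0) :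
    EqOn u 0 (Ioo a b) := by
  have hloc : ∀ s ∈ Ioo a b, u s = 0 → u =ᶠ[𝓝 s] 0 := fun s hs hs0 =>
    eventuallyEq_zero_of_hasDerivAt_smul_self (hc.continuousAt (isOpen_Ioo.mem_nhds hs))
      (eventually_of_mem (isOpen_Ioo.mem_nhds hs) hu) hs0
  suffices Ioo a b ⊆ {s | u =ᶠ[𝓝 s] 0} from fun s hs => (this hs).eq_of_nhds
  refine isPreconnected_Ioo.subset_of_closure_inter_subset isOpen_setOfPred_eventually_nhds
    ⟨t₀, ht₀, hloc t₀ ht₀ h0⟩ ?_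
  rintro s ⟨hs_cl, hs⟩
  refine hloc s hs ?_
  have hzero : u '' {s | u =ᶠ[𝓝 s] 0} ⊆ {0} := image_subset_iff.2 fun t ht => ht.eq_of_nhds
  simpa using closure_mono hzero
    ((hu s hs).continuousAt.continuousWithinAt.mem_closure_image hs_cl)

end LinearODE

theorem ContinuousLinearMap.apply_prod (L : ℝ × ℝ →L[ℝ] ℝ) (x y : ℝ) :
    L (x, y) = x * L (1, 0) + y * L (0, 1) := by
  have : ((x, y) : ℝ × ℝ) = x • ((1, 0) : ℝ × ℝ) + y • ((0, 1) : ℝ × ℝ) := by simp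
  rw [this, map_add, map_smul, map_smul, smul_eq_mul, smul_eq_mul]

theorem ContinuousLinearMap.apply_hamiltonian_add_mul_gradient (L : ℝ × ℝ →L[ℝ] ℝ) (r : ℝ) :
    L (L (0, 1) + r * L (1, 0), -L (1, 0) + r * L (0, 1)) =
      (L (1, 0) ^ 2 + L (0, 1) ^ 2) * r := by
  rw [L.apply_prod]
  ring

/-- The zero level set of `h` is invariant for the vector field
`X = (∂h/∂x₂ + h ∂h/∂x₁, -∂h/∂x₁ + h ∂h/∂x₂)`: any solution of `ẋ = X(x)` on an open
interval starting at a point where `h = 0` stays in the zero set of `h`. -/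
theorem zero_set_invariant (h : ℝ × ℝ → ℝ) (hh : ContDiff ℝ 1 h)
    (X : ℝ × ℝ → ℝ × ℝ)
    (hX : ∀ p : ℝ × ℝ,
      X p = (fderiv ℝ h p (0, 1) + h p * fderiv ℝ h p (1, 0),
             -(fderiv ℝ h p (1, 0)) + h p * fderiv ℝ h p (0, 1)))
    (a b t₀ : ℝ) (ht₀ : t₀ ∈ Set.Ioo a b)
    (γ : ℝ → ℝ × ℝ) (hγ : ∀ t ∈ Set.Ioo a b, HasDerivAt γ (X (γ t)) t)
    (h0 : h (γ t₀) = 0) :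
    ∀ t ∈ Set.Ioo a b, h (γ t) = 0 := by
  set gradNormSq : ℝ × ℝ → ℝ := fun p => fderiv ℝ h p (1, 0) ^ 2 + fderiv ℝ h p (0, 1) ^ 2
  have hderiv : ∀ t ∈ Ioo a b, HasDerivAt (h ∘ γ) (gradNormSq (γ t) • (h ∘ γ) t) t := by
    intro t ht
    have hchain := ((hh.differentiable one_ne_zero (γ t)).hasFDerivAt).comp_hasDerivAt t (hγ t ht)
    rwa [hX, ContinuousLinearMap.apply_hamiltonian_add_mul_gradient] at hchain
  have hcont : ContinuousOn (gradNormSq ∘ γ) (Ioo a b) := by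
    have := hh.continuous_fderiv one_ne_zero
    exact Continuous.comp_continuousOn (by fun_prop) (HasDerivAt.continuousOn hγ)
  exact eqOn_zero_of_hasDerivAt_smul_self hcont hderiv ht₀ h0
end

section
/- Let Γ be a limit periodic set of a continuous family of planar vector fields (X_λ) at the parameter λ₀, i.e. there are parameters λₙ → λ₀ and periodic orbits γₙ of X_{λₙ} converging to Γ in the Hausdorff metric. Then Γ is invariant under the flow of X_{λ₀}: for every a ∈ Γ and every time s for which the flow Φ(s, a, λ₀) is defined, Φ(s, a, λ₀) ∈ Γ. -/
/-!
Take `a ∈ Γ` and a time `s`. Since `γₙ → Γ` in the Hausdorff metric, there are points `xₙ ∈ γₙ`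
with `xₙ → a`. By invariance `Φ(s, xₙ, λₙ) ∈ γₙ`, and by joint continuity of the flow in the
time, the point and the parameter these points converge to `Φ(s, a, λ₀)`. A limit of points of
sets converging to the closed set `Γ` lies in `Γ`.
-/

open Filter Topology

namespace Metric

variable {α : Type*} [PseudoMetricSpace α] {t : Set α}

theorem exists_seq_mem_tendsto_of_hausdorffDist_tendsto_zero {s : ℕ → Set α}
    (hfin : ∀ n, hausdorffEDist (s n) t ≠ ⊤)
    (h : Tendsto (fun n => hausdorffDist (s n) t) atTop (𝓝 0)) {a : α} (ha : a ∈ t) :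
    ∃ x : ℕ → α, (∀ n, x n ∈ s n) ∧ Tendsto x atTop (𝓝 a) := by
  have hclose : ∀ n, ∃ x ∈ s n, dist x a < hausdorffDist (s n) t + 1 / (n + 1) := fun n =>
    exists_dist_lt_of_hausdorffDist_lt' ha (lt_add_of_pos_right _ Nat.one_div_pos_of_nat)
      (hfin n)
  choose x hx hxa using hclose
  refine ⟨x, hx, tendsto_iff_dist_tendsto_zero.2 ?_⟩
  have hbound : Tendsto (fun n : ℕ => hausdorffDist (s n) t + 1 / (n + 1)) atTop (𝓝 0) := by
    simpa using h.add tendsto_one_div_add_atTop_nhds_zero_nat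
  exact squeeze_zero (fun _ => dist_nonneg) (fun n => (hxa n).le) hbound

theorem mem_closure_of_tendsto_of_hausdorffDist_tendsto_zero {ι : Type*} {l : Filter ι}
    [l.NeBot] {s : ι → Set α} (hfin : ∀ i, hausdorffEDist (s i) t ≠ ⊤)
    (h : Tendsto (fun i => hausdorffDist (s i) t) l (𝓝 0)) {y : ι → α} (hy : ∀ i, y i ∈ s i)
    {b : α} (hb : Tendsto y l (𝓝 b)) : b ∈ closure t := by
  refine mem_closure_iff.2 fun ε hε => ?_
  have hnear : ∀ᶠ i in l, dist (y i) b < ε / 2 ∧ hausdorffDist (s i) t < ε / 2 :=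
    (hb.eventually (ball_mem_nhds b (half_pos hε))).and
      (h.eventually (gt_mem_nhds (half_pos hε)))
  obtain ⟨i, hyb, hst⟩ := hnear.exists
  obtain ⟨z, hz, hyz⟩ := exists_dist_lt_of_hausdorffDist_lt (hy i) hst (hfin i)
  refine ⟨z, hz, ?_⟩
  calc dist b z ≤ dist (y i) b + dist (y i) z := dist_triangle_left _ _ _
    _ < ε / 2 + ε / 2 := add_lt_add hyb hyz
    _ = ε := add_halves ε

end Metric

theorem limit_periodic_set_invariant_general {Λ : Type*} [MetricSpace Λ]
    (Φ : ℝ × (ℝ × ℝ) × Λ → ℝ × ℝ) (hΦ : Continuous Φ)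
    (lam : ℕ → Λ) (lam₀ : Λ) (hlam : Filter.Tendsto lam Filter.atTop (nhds lam₀))
    (γ : ℕ → Set (ℝ × ℝ)) (hγc : ∀ n, IsCompact (γ n)) (hγne : ∀ n, (γ n).Nonempty)
    (hinv : ∀ n, ∀ s : ℝ, ∀ x ∈ γ n, Φ (s, x, lam n) ∈ γ n)
    (Γ : Set (ℝ × ℝ)) (hΓc : IsCompact Γ)
    (hconv : Filter.Tendsto (fun n => Metric.hausdorffDist (γ n) Γ)
      Filter.atTop (nhds 0)) :
    ∀ a ∈ Γ, ∀ s : ℝ, Φ (s, a, lam₀) ∈ Γ := by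
  intro a ha s
  have hfin : ∀ n, Metric.hausdorffEDist (γ n) Γ ≠ ⊤ := fun n =>
    Metric.hausdorffEDist_ne_top_of_nonempty_of_bounded (hγne n) ⟨a, ha⟩ (hγc n).isBounded
      hΓc.isBounded
  obtain ⟨x, hxγ, hxa⟩ :=
    Metric.exists_seq_mem_tendsto_of_hausdorffDist_tendsto_zero hfin hconv ha
  have hflow : Tendsto (fun n => Φ (s, x n, lam n)) atTop (𝓝 (Φ (s, a, lam₀))) :=
    (hΦ.tendsto _).comp (tendsto_const_nhds.prodMk_nhds (hxa.prodMk_nhds hlam))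
  rw [← hΓc.isClosed.closure_eq]
  exact Metric.mem_closure_of_tendsto_of_hausdorffDist_tendsto_zero hfin hconv
    (fun n => hinv n s (x n) (hxγ n)) hflow

/-- A limit periodic set is invariant under the flow of the limiting vector field. -/
theorem limit_periodic_set_invariant {Λ : Type*} [MetricSpace Λ]
    (Φ : ℝ × (ℝ × ℝ) × Λ → ℝ × ℝ) (hΦ : Continuous Φ)
    (lam : ℕ → Λ) (lam₀ : Λ) (hlam : Filter.Tendsto lam Filter.atTop (nhds lam₀))
    (γ : ℕ → Set (ℝ × ℝ)) (hγc : ∀ n, IsCompact (γ n)) (hγne : ∀ n, (γ n).Nonempty)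
    (hinv : ∀ n, ∀ s : ℝ, ∀ x ∈ γ n, Φ (s, x, lam n) ∈ γ n)
    (Γ : Set (ℝ × ℝ)) (hΓc : IsCompact Γ) (hΓne : Γ.Nonempty)
    (hconv : Filter.Tendsto (fun n => Metric.hausdorffDist (γ n) Γ)
      Filter.atTop (nhds 0)) :
    ∀ a ∈ Γ, ∀ s : ℝ, Φ (s, a, lam₀) ∈ Γ :=
  limit_periodic_set_invariant_general Φ hΦ lam lam₀ hlam γ hγc hγne hinv Γ hΓc hconv
end

section
/- Let f ∈ ℝ[x₁,x₂], S ⊂ ℝ² finite, and h(x,λ) = f(x)² - λ·∏_{p∈S}(‖x-p‖² - λ²). Let a ∈ ℝ² with f(a) = 0 and a ∉ S. Then there exist ε > 0, a compact neighbourhood V of a, and a continuous (indeed analytic) function λ̂ : V → ℝ with λ̂ ≥ 0, λ̂(x) = 0 iff f(x) = 0 for x ∈ V, and h(x, λ̂(x)) = 0 for all x ∈ V. -/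
/-- `h(x,λ) = f(x)² - λ ∏_{p ∈ S} (‖x-p‖² - λ²)`. -/
noncomputable def hfun (f : MvPolynomial (Fin 2) ℝ)
    (S : Finset (EuclideanSpace ℝ (Fin 2))) (x : EuclideanSpace ℝ (Fin 2))
    (lam : ℝ) : ℝ :=
  (MvPolynomial.eval (fun i => x i) f) ^ 2 - lam * ∏ p ∈ S, (‖x - p‖ ^ 2 - lam ^ 2)

local notation "E" => EuclideanSpace ℝ (Fin 2)

lemma contDiff_mveval (f : MvPolynomial (Fin 2) ℝ) :
    ContDiff ℝ (⊤ : ℕ∞) (fun x : E => MvPolynomial.eval (fun i => x i) f) := by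
  induction f using MvPolynomial.induction_on with
  | C c => simpa using contDiff_const
  | add p q hp hq => simpa [map_add] using hp.add hq
  | mul_X p n hp =>
      simp only [map_mul, MvPolynomial.eval_X]
      exact hp.mul (EuclideanSpace.proj n : E →L[ℝ] ℝ).contDiff

lemma contDiff_u (S : Finset E) :
    ContDiff ℝ (⊤ : ℕ∞) (fun z : E × ℝ => ∏ p ∈ S, (‖z.1 - p‖ ^ 2 - z.2 ^ 2)) := by
  classical
  induction S using Finset.induction_on with
  | empty => simpa using contDiff_const
  | @insert p s hp ih =>
      simp only [Finset.prod_insert hp]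
      refine ContDiff.mul ?_ ih
      refine ContDiff.sub ?_ (contDiff_snd.pow 2)
      exact (contDiff_norm_sq ℝ).comp (contDiff_fst.sub contDiff_const)

/-- Near a zero of `f` outside `S`, the equation `h = 0` is solved by a nonnegative
continuous function `λ̂` vanishing exactly on the zero set of `f`. -/
theorem implicit_lambda (f : MvPolynomial (Fin 2) ℝ)
    (S : Finset (EuclideanSpace ℝ (Fin 2))) (a : EuclideanSpace ℝ (Fin 2))
    (ha : MvPolynomial.eval (fun i => a i) f = 0) (haS : a ∉ S) :
    ∃ ε > (0 : ℝ), ∃ V : Set (EuclideanSpace ℝ (Fin 2)), IsCompact V ∧ V ∈ nhds a ∧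
      ∃ lam : EuclideanSpace ℝ (Fin 2) → ℝ, ContinuousOn lam V ∧
        (∀ x ∈ V, 0 ≤ lam x ∧ lam x < ε) ∧
        (∀ x ∈ V, (lam x = 0 ↔ MvPolynomial.eval (fun i => x i) f = 0)) ∧
        (∀ x ∈ V, hfun f S x (lam x) = 0) := by
  classical
  set F : E → ℝ := fun x => MvPolynomial.eval (fun i => x i) f with hFdef
  set u : E × ℝ → ℝ := fun z => ∏ p ∈ S, (‖z.1 - p‖ ^ 2 - z.2 ^ 2) with hudef
  set h : E × ℝ → ℝ := fun z => hfun f S z.1 z.2 with hhdef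
  have hheq : ∀ z : E × ℝ, h z = F z.1 ^ 2 - z.2 * u z := fun z => rfl
  -- positivity of u at (a,0)
  set c0 : ℝ := u (a, 0) with hc0def
  have hc0 : 0 < c0 := by
    rw [hc0def, hudef]
    apply Finset.prod_pos
    intro p hp
    have : a - p ≠ 0 := sub_ne_zero.mpr (by rintro rfl; exact haS hp)
    simpa using pow_pos (norm_pos_iff.mpr this) 2
  -- strict derivatives
  have hF : HasStrictFDerivAt F (fderiv ℝ F a) a :=
    ((contDiff_mveval f).contDiffAt).hasStrictFDerivAt (by simp)
  have h1 : HasStrictFDerivAt (fun z : E × ℝ => F z.1)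
      ((fderiv ℝ F a).comp (ContinuousLinearMap.fst ℝ E ℝ)) (a, 0) :=
    hF.comp (a, 0) hasStrictFDerivAt_fst
  have hU : HasStrictFDerivAt u (fderiv ℝ u (a, 0)) (a, 0) :=
    ((contDiff_u S).contDiffAt).hasStrictFDerivAt (by simp)
  have hh2 : HasStrictFDerivAt h (-(c0 • ContinuousLinearMap.snd ℝ E ℝ)) (a, 0) := by
    have hd := ((h1.mul h1).sub (hasStrictFDerivAt_snd.mul hU))
    have hFa : F a = 0 := ha
    have hfun_eq : h = fun z : E × ℝ => F z.1 * F z.1 - z.2 * u z :=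
      funext fun z => by rw [hheq]; ring
    simp only [hFa, zero_smul, add_zero, zero_add, zero_sub] at hd
    rw [hfun_eq]
    exact hd
  have hceq : ((ContinuousLinearMap.fst ℝ E ℝ).prod (-(c0 • ContinuousLinearMap.snd ℝ E ℝ)))
      = (((ContinuousLinearEquiv.refl ℝ E).prodCongr
          (ContinuousLinearEquiv.unitsEquivAut ℝ (Units.mk0 (-c0) (neg_ne_zero.mpr hc0.ne')))) :
          E × ℝ →L[ℝ] E × ℝ) := by
    ext z <;> simp [ContinuousLinearEquiv.unitsEquivAut_apply, mul_comm]
  set e := ((ContinuousLinearEquiv.refl ℝ E).prodCongr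
      (ContinuousLinearEquiv.unitsEquivAut ℝ (Units.mk0 (-c0) (neg_ne_zero.mpr hc0.ne')))) with hedef
  set H : E × ℝ → E × ℝ := fun z => (z.1, h z) with hHdef
  have hH : HasStrictFDerivAt H (e : (E × ℝ) →L[ℝ] E × ℝ) (a, 0) := by
    rw [← hceq]
    exact HasStrictFDerivAt.prodMk hasStrictFDerivAt_fst hh2
  set Φ := HasStrictFDerivAt.toOpenPartialHomeomorph H hH with hΦdef
  have hcoe : ⇑Φ = H := HasStrictFDerivAt.toOpenPartialHomeomorph_coe hH
  have hsrc : (a, 0) ∈ Φ.source := HasStrictFDerivAt.mem_toOpenPartialHomeomorph_source hH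
  have hH0 : H (a, 0) = (a, 0) := by
    have : h (a, 0) = 0 := by rw [hheq]; simp [ha, hFdef]
    simp [hHdef, this]
  have htgt : (a, 0) ∈ Φ.target := by
    have := Φ.map_source hsrc
    rwa [hcoe, hH0] at this
  have hsymma : Φ.symm (a, 0) = (a, 0) := by
    have := Φ.left_inv hsrc
    rwa [hcoe, hH0] at this
  set ψ : E → E × ℝ := fun x => Φ.symm (x, 0) with hψdef
  set g : E → E × ℝ := fun x => (x, (0 : ℝ)) with hgdef
  have hg : Continuous g := continuous_id.prodMk continuous_const
  have hψcont : ContinuousOn ψ (g ⁻¹' Φ.target) :=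
    Φ.continuousOn_symm.comp hg.continuousOn (fun x hx => hx)
  have huc : Continuous u := (contDiff_u S).continuous
  set O : Set (E × ℝ) := {z | 0 < u z ∧ z.2 < 1} with hOdef
  have hO : IsOpen O :=
    (isOpen_lt continuous_const huc).inter (isOpen_lt continuous_snd continuous_const)
  set W := (g ⁻¹' Φ.target) ∩ ψ ⁻¹' O with hWdef
  have hWopen : IsOpen W := hψcont.isOpen_inter_preimage (Φ.open_target.preimage hg) hO
  have haW : a ∈ W := by
    refine ⟨htgt, ?_⟩
    show ψ a ∈ O
    have : ψ a = (a, 0) := hsymma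
    rw [this]
    exact ⟨hc0, one_pos⟩
  obtain ⟨r, hr, hrW⟩ : ∃ r > 0, Metric.closedBall a r ⊆ W :=
    Metric.nhds_basis_closedBall.mem_iff.mp (hWopen.mem_nhds haW)
  have hVsub : Metric.closedBall a r ⊆ g ⁻¹' Φ.target := fun x hx => (hrW hx).1
  -- per-point facts
  have keyfacts : ∀ x ∈ Metric.closedBall a r,
      hfun f S x ((ψ x).2) = 0 ∧ 0 < u (ψ x) ∧ (ψ x).2 < 1 ∧
        F x ^ 2 = (ψ x).2 * u (ψ x) := by
    intro x hx
    obtain ⟨hx1, hx2⟩ := hrW hx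
    have hri : H (ψ x) = (x, 0) := by
      have := Φ.right_inv hx1
      rwa [hcoe] at this
    have hfst : (ψ x).1 = x := congrArg Prod.fst hri
    have hzero : h (ψ x) = 0 := congrArg Prod.snd hri
    have hmain : hfun f S x ((ψ x).2) = 0 := by
      have h0 : hfun f S (ψ x).1 (ψ x).2 = 0 := hzero
      rwa [hfst] at h0
    have hux : u (ψ x) = ∏ p ∈ S, (‖x - p‖ ^ 2 - (ψ x).2 ^ 2) := by
      rw [hudef]; simp only [hfst]
    have key : F x ^ 2 = (ψ x).2 * u (ψ x) := by
      have h0 := hmain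
      unfold hfun at h0
      rw [hux, hFdef]
      linarith
    exact ⟨hmain, hx2.1, hx2.2, key⟩
  refine ⟨1, one_pos, Metric.closedBall a r, isCompact_closedBall a r,
    Metric.closedBall_mem_nhds a hr, fun x => (ψ x).2, ?_, ?_, ?_, ?_⟩
  · exact continuous_snd.comp_continuousOn (hψcont.mono hVsub)
  · intro x hx
    obtain ⟨-, hupos, hlt, key⟩ := keyfacts x hx
    have hFsq : 0 ≤ F x ^ 2 := sq_nonneg _
    refine ⟨?_, hlt⟩
    nlinarith
  · intro x hx
    obtain ⟨-, hupos, -, key⟩ := keyfacts x hx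
    constructor
    · intro h0
      have h0' : (ψ x).2 = 0 := h0
      have : F x ^ 2 = 0 := by rw [key, h0', zero_mul]
      exact pow_eq_zero_iff (by norm_num) |>.mp this
    · intro h0
      have hF0 : F x = 0 := h0
      have : (ψ x).2 * u (ψ x) = 0 := by rw [← key, hF0]; ring
      rcases mul_eq_zero.mp this with h' | h'
      · exact h'
      · exact absurd h' hupos.ne'
  · intro x hx
    exact (keyfacts x hx).1
end
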